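/- Let σ : ℝ → ℝ be 1-Lipschitz with σ(0) = 0, let L ≥ 1, and let θ = (W_1,…,W_L) and θ' = (W'_1,…,W'_L) be parameters of two bias-free networks with the same architecture (L, (N_0,…,N_L)). Then for every x ∈ ℝ^{N_0}: ‖R_θ(x) − R_{θ'}(x)‖_∞ ≤ ‖x‖_∞ · Σ_{ℓ=1}^{L} (∏_{k=ℓ+1}^{L} ‖W_k‖_{op,∞}) · (∏_{k=1}^{ℓ−1} ‖W'_k‖_{op,∞}) · ‖W_ℓ − W'_ℓ‖_{op,∞}, with empty products equal to 1. -/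
import Mathlib


/-- The ℓ∞ operator norm of a real matrix: `sup_{‖x‖∞ = 1} ‖Ax‖∞`
(the norm on `n → ℝ` is the sup norm). -/
noncomputable def opNormInf {m n : Type*} [Fintype m] [Fintype n] (A : Matrix m n ℝ) : ℝ :=
  sSup ((fun x : n → ℝ => ‖A.mulVec x‖) '' {x | ‖x‖ = 1})

/-- Realization of a bias-free network: layer `ℓ` (0-indexed) has weight matrix
`W ℓ ∈ ℝ^{N (ℓ+1) × N ℓ}`, the activation `σ` is applied componentwise. -/
noncomputable def realize (σ : ℝ → ℝ) (N : ℕ → ℕ)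
    (W : ∀ ℓ : ℕ, Matrix (Fin (N (ℓ + 1))) (Fin (N ℓ)) ℝ) :
    (L : ℕ) → (Fin (N 0) → ℝ) → Fin (N L) → ℝ
  | 0, x => x
  | L + 1, x => fun i => σ ((W L).mulVec (realize σ N W L x) i)

lemma crude_bound {m n : Type*} [Fintype m] [Fintype n] (A : Matrix m n ℝ) (v : n → ℝ) :
    ‖A.mulVec v‖ ≤ (∑ i, ∑ j, |A i j|) * ‖v‖ := by
  set C : ℝ := ∑ i, ∑ j, |A i j| with hC
  have hC0 : 0 ≤ C := Finset.sum_nonneg fun i _ => Finset.sum_nonneg fun j _ => abs_nonneg _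
  rw [pi_norm_le_iff_of_nonneg (by positivity)]
  intro i
  calc ‖A.mulVec v i‖ = |∑ j, A i j * v j| := by rfl
    _ ≤ ∑ j, |A i j * v j| := Finset.abs_sum_le_sum_abs _ _
    _ ≤ ∑ j, |A i j| * ‖v‖ := by
        refine Finset.sum_le_sum fun j _ => ?_
        rw [abs_mul]
        exact mul_le_mul_of_nonneg_left (norm_le_pi_norm v j) (abs_nonneg _)
    _ = (∑ j, |A i j|) * ‖v‖ := by rw [Finset.sum_mul]
    _ ≤ C * ‖v‖ := by
        refine mul_le_mul_of_nonneg_right ?_ (norm_nonneg _)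
        exact Finset.single_le_sum (f := fun i => ∑ j, |A i j|)
          (fun i _ => Finset.sum_nonneg fun j _ => abs_nonneg _) (Finset.mem_univ i)

lemma opNormInf_nonneg {m n : Type*} [Fintype m] [Fintype n] (A : Matrix m n ℝ) :
    0 ≤ opNormInf A :=
  Real.sSup_nonneg (by rintro y ⟨v, -, rfl⟩; exact norm_nonneg _)

lemma mulVec_le_opNormInf {m n : Type*} [Fintype m] [Fintype n] (A : Matrix m n ℝ) (v : n → ℝ) :
    ‖A.mulVec v‖ ≤ opNormInf A * ‖v‖ := by
  rcases eq_or_ne v 0 with rfl | hv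
  · simp [Matrix.mulVec_zero]
  have hc : (0:ℝ) < ‖v‖ := norm_pos_iff.mpr hv
  set u : n → ℝ := ‖v‖⁻¹ • v with hu
  have hu1 : ‖u‖ = 1 := by
    rw [hu, norm_smul, norm_inv, norm_norm, inv_mul_cancel₀ hc.ne']
  have hbdd : BddAbove ((fun x : n → ℝ => ‖A.mulVec x‖) '' {x | ‖x‖ = 1}) := by
    refine ⟨∑ i, ∑ j, |A i j|, ?_⟩
    rintro y ⟨w, hw, rfl⟩
    have := crude_bound A w
    rwa [hw, mul_one] at this
  have hmem : ‖A.mulVec u‖ ∈ (fun x : n → ℝ => ‖A.mulVec x‖) '' {x | ‖x‖ = 1} :=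
    ⟨u, hu1, rfl⟩
  have h1 : ‖A.mulVec u‖ ≤ opNormInf A := le_csSup hbdd hmem
  have hvu : v = ‖v‖ • u := by
    rw [hu, smul_smul, mul_inv_cancel₀ hc.ne', one_smul]
  calc ‖A.mulVec v‖ = ‖‖v‖ • A.mulVec u‖ := by
        rw [← Matrix.mulVec_smul, ← hvu]
    _ = ‖v‖ * ‖A.mulVec u‖ := by
        rw [norm_smul, Real.norm_eq_abs, abs_of_nonneg (norm_nonneg v)]
    _ ≤ ‖v‖ * opNormInf A := mul_le_mul_of_nonneg_left h1 hc.le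
    _ = opNormInf A * ‖v‖ := mul_comm _ _

lemma sigma_contraction {σ : ℝ → ℝ} (hσ : LipschitzWith 1 σ) {n : Type*} [Fintype n]
    (u v : n → ℝ) : ‖(fun i => σ (u i)) - fun i => σ (v i)‖ ≤ ‖u - v‖ := by
  rw [pi_norm_le_iff_of_nonneg (norm_nonneg _)]
  intro i
  have h := hσ.dist_le_mul (u i) (v i)
  simp only [NNReal.coe_one, one_mul, Real.dist_eq] at h
  calc ‖((fun i => σ (u i)) - fun i => σ (v i)) i‖ = |σ (u i) - σ (v i)| := rfl
    _ ≤ |u i - v i| := h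
    _ = ‖(u - v) i‖ := rfl
    _ ≤ ‖u - v‖ := norm_le_pi_norm _ i

lemma realize_growth (σ : ℝ → ℝ) (hσ : LipschitzWith 1 σ) (hσ0 : σ 0 = 0) (N : ℕ → ℕ)
    (W : ∀ ℓ : ℕ, Matrix (Fin (N (ℓ + 1))) (Fin (N ℓ)) ℝ) (x : Fin (N 0) → ℝ) :
    ∀ L : ℕ, ‖realize σ N W L x‖ ≤ (∏ k ∈ Finset.range L, opNormInf (W k)) * ‖x‖ := by
  intro L
  induction L with
  | zero => simp [realize]
  | succ L ih =>
    have h1 : ‖realize σ N W (L + 1) x‖ ≤ ‖(W L).mulVec (realize σ N W L x)‖ := by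
      have h := sigma_contraction hσ ((W L).mulVec (realize σ N W L x))
        (0 : Fin (N (L + 1)) → ℝ)
      have e : (fun i : Fin (N (L + 1)) => σ ((0 : Fin (N (L + 1)) → ℝ) i)) = 0 := by
        funext i; simp [hσ0]
      rw [e, sub_zero, sub_zero] at h
      simpa [realize] using h
    calc ‖realize σ N W (L + 1) x‖ ≤ ‖(W L).mulVec (realize σ N W L x)‖ := h1
      _ ≤ opNormInf (W L) * ‖realize σ N W L x‖ := mulVec_le_opNormInf _ _
      _ ≤ opNormInf (W L) * ((∏ k ∈ Finset.range L, opNormInf (W k)) * ‖x‖) := by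
          exact mul_le_mul_of_nonneg_left ih (opNormInf_nonneg _)
      _ = (∏ k ∈ Finset.range (L + 1), opNormInf (W k)) * ‖x‖ := by
          rw [Finset.prod_range_succ]; ring

/-- for a 1-Lipschitz activation `σ` with `σ 0 = 0` and two bias-free networks
with the same architecture (layers 0-indexed: paper layer `ℓ` is index `ℓ-1`),
`‖R_θ(x) - R_{θ'}(x)‖∞ ≤ ‖x‖∞ · Σ_{ℓ=1}^L (∏_{k=ℓ+1}^L ‖W_k‖_{op,∞})
(∏_{k=1}^{ℓ-1} ‖W'_k‖_{op,∞}) ‖W_ℓ - W'_ℓ‖_{op,∞}`, with empty products equal to `1`. -/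
theorem statement11 (σ : ℝ → ℝ) (hσ : LipschitzWith 1 σ) (hσ0 : σ 0 = 0)
    (L : ℕ) (hL : 1 ≤ L) (N : ℕ → ℕ)
    (W W' : ∀ ℓ : ℕ, Matrix (Fin (N (ℓ + 1))) (Fin (N ℓ)) ℝ)
    (x : Fin (N 0) → ℝ) :
    ‖realize σ N W L x - realize σ N W' L x‖ ≤
      ‖x‖ * ∑ ℓ ∈ Finset.range L,
        (∏ k ∈ Finset.Ico (ℓ + 1) L, opNormInf (W k)) *
          (∏ k ∈ Finset.range ℓ, opNormInf (W' k)) *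
          opNormInf (W ℓ - W' ℓ) := by
  clear hL
  induction L with
  | zero => simp [realize]
  | succ L ih =>
    set y := realize σ N W L x with hy
    set y' := realize σ N W' L x with hy'
    have hsplit : (W L).mulVec y - (W' L).mulVec y' =
        (W L).mulVec (y - y') + (W L - W' L).mulVec y' := by
      rw [Matrix.mulVec_sub, Matrix.sub_mulVec]; abel
    have hstep : ‖realize σ N W (L + 1) x - realize σ N W' (L + 1) x‖ ≤
        ‖(W L).mulVec y - (W' L).mulVec y'‖ := by
      have := sigma_contraction hσ ((W L).mulVec y) ((W' L).mulVec y')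
      simpa [realize] using this
    have hgrow := realize_growth σ hσ hσ0 N W' x L
    set S := ∑ ℓ ∈ Finset.range L,
        (∏ k ∈ Finset.Ico (ℓ + 1) L, opNormInf (W k)) *
          (∏ k ∈ Finset.range ℓ, opNormInf (W' k)) * opNormInf (W ℓ - W' ℓ) with hS
    have hmain : ‖realize σ N W (L + 1) x - realize σ N W' (L + 1) x‖ ≤
        opNormInf (W L) * (‖x‖ * S) +
          opNormInf (W L - W' L) * ((∏ k ∈ Finset.range L, opNormInf (W' k)) * ‖x‖) := by
      calc ‖realize σ N W (L + 1) x - realize σ N W' (L + 1) x‖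
          ≤ ‖(W L).mulVec y - (W' L).mulVec y'‖ := hstep
        _ ≤ ‖(W L).mulVec (y - y')‖ + ‖(W L - W' L).mulVec y'‖ := by
            rw [hsplit]; exact norm_add_le _ _
        _ ≤ opNormInf (W L) * ‖y - y'‖ + opNormInf (W L - W' L) * ‖y'‖ :=
            add_le_add (mulVec_le_opNormInf _ _) (mulVec_le_opNormInf _ _)
        _ ≤ _ := add_le_add
            (mul_le_mul_of_nonneg_left ih (opNormInf_nonneg _))
            (mul_le_mul_of_nonneg_left hgrow (opNormInf_nonneg _))
    refine hmain.trans (le_of_eq ?_)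
    rw [Finset.sum_range_succ, hS, Finset.mul_sum, Finset.mul_sum]
    have hterm : ∀ ℓ ∈ Finset.range L,
        ‖x‖ * ((∏ k ∈ Finset.Ico (ℓ + 1) (L + 1), opNormInf (W k)) *
          (∏ k ∈ Finset.range ℓ, opNormInf (W' k)) * opNormInf (W ℓ - W' ℓ)) =
        opNormInf (W L) * (‖x‖ * ((∏ k ∈ Finset.Ico (ℓ + 1) L, opNormInf (W k)) *
          (∏ k ∈ Finset.range ℓ, opNormInf (W' k)) * opNormInf (W ℓ - W' ℓ))) := by
      intro ℓ hℓ
      rw [Finset.prod_Ico_succ_top (Nat.succ_le_of_lt (Finset.mem_range.mp hℓ))]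
      ring
    rw [mul_add, Finset.mul_sum, Finset.sum_congr rfl hterm]
    simp only [Finset.Ico_self, Finset.prod_empty, one_mul]
    ring
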